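/- Fix $\mu\in\mathbb{R}$, $\sigma>0$, $x_0<S$, $u\in\mathbb{R}$, and $0<\theta<t$, and set $m=\max\{u,0\}$. Define $\alpha_W(x,\theta\,|\,x_0)=\frac{1}{\sqrt{2\pi\sigma^2\theta}}\exp\{-\frac{(x-x_0-\mu\theta)^2}{2\sigma^2\theta}\}[1-\exp\{-\frac{2(S-x)(S-x_0)}{\sigma^2\theta}\}]$ and $g_W(S,\tau\,|\,y)=\frac{S-y}{\sqrt{2\pi\sigma^2\tau^3}}\exp\{-\frac{(S-y-\mu\tau)^2}{2\sigma^2\tau}\}$. Then $\int_{-\infty}^{S-m}\alpha_W(x,\theta\,|\,x_0)\,g_W(S,t-\theta\,|\,x+u)\,\mathrm{d}x=\frac{1}{2\pi t}\sqrt{\frac{\theta}{t-\theta}}\exp\{-\frac{(S-u-x_0-\mu t)^2}{2\sigma^2 t}\}\{A_-(\theta,u)-\exp[-\frac{2(S-x_0)u}{\sigma^2 t}]A_+(\theta,u)\}$, where $A_{\pm}(\theta,u)=\exp\{-\frac{[(m-u)\theta\pm(S-x_0\pm m)(t-\theta)]^2}{2\sigma^2\theta t(t-\theta)}\}\mp\sqrt{\frac{2\pi(t-\theta)}{\sigma^2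 t\theta}}\,(S-x_0\pm u)\{1-\Phi[\frac{(m-u)\theta\pm(S-x_0\pm m)(t-\theta)}{\sqrt{\sigma^2\theta t(t-\theta)}}]\}$. -/

import Mathlib

/-!
By the reflection principle the killed density `α_W(·, θ | x₀)` is the free Gaussian density from
`x₀` minus the free Gaussian density from the mirror image `2S - x₀`, reweighted by
`exp (2μ(S - x₀)/σ²)`. Multiplying either one by the Gaussian factor of `g_W(S, t - θ | x + u)` and
completing the square splits off the free density from the start point to `S - u` over `[0, t]`
and leaves a Brownian-bridge kernel in `x`, with mean `((t - θ) y + θ (S - u)) / t` and variance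
`σ²θ(t - θ)/t`; the drift cancels. What remains is `∫_{-∞}^{L} (p - x) e^{-(x-c)²/2v} dx`, which is
`v e^{-(L-c)²/2v}` (an exact derivative) plus `(p - c) √(2πv) Φ((L - c)/√v)`.
-/

open MeasureTheory Real

/-- The standard normal distribution function `Φ`. -/
noncomputable def stdNormalCDF (z : ℝ) : ℝ :=
  (Real.sqrt (2 * Real.pi))⁻¹ * ∫ x in Set.Iic z, Real.exp (-x ^ 2 / 2)

open Set Filter

section Gaussian

variable {v : ℝ}

lemma integrable_exp_neg_sq_div (c : ℝ) (hv : 0 < v) :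
    Integrable (fun x : ℝ => exp (-(x - c) ^ 2 / (2 * v))) := by
  refine ((integrable_exp_neg_mul_sq (b := (2 * v)⁻¹) (by positivity)).comp_sub_right c).congr
    (Eventually.of_forall fun x => ?_)
  ring_nf

lemma integrable_sub_mul_exp_neg_sq_div (p c : ℝ) (hv : 0 < v) :
    Integrable (fun x : ℝ => (p - x) * exp (-(x - c) ^ 2 / (2 * v))) := by
  have hmom := ((integrable_mul_exp_neg_mul_sq (b := (2 * v)⁻¹) (by positivity)).comp_sub_right c)
  refine (((integrable_exp_neg_sq_div c hv).const_mul (p - c)).sub hmom).congr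
    (Eventually.of_forall fun x => ?_)
  simp only [Pi.sub_apply]
  ring_nf

lemma integral_exp_neg_sq_div_two : ∫ x : ℝ, exp (-x ^ 2 / 2) = √(2 * π) := by
  have h := integral_gaussian (1 / 2)
  rw [show π / (1 / 2) = 2 * π by ring] at h
  rw [← h]
  congr 1 with x
  ring_nf

lemma stdNormalCDF_neg (z : ℝ) : stdNormalCDF (-z) = 1 - stdNormalCDF z := by
  have hint : Integrable (fun x : ℝ => exp (-x ^ 2 / 2)) := by
    simpa using integrable_exp_neg_sq_div 0 one_pos
  have hreflect : ∫ x in Iic (-z), exp (-x ^ 2 / 2) = ∫ x in Ioi z, exp (-x ^ 2 / 2) := by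
    have h := integral_comp_neg_Iic (-z) fun x : ℝ => exp (-x ^ 2 / 2)
    simp only [neg_neg, even_two.neg_pow] at h
    exact h
  have hsplit := integral_add_compl (measurableSet_Iic (a := z)) hint
  rw [compl_Iic, integral_exp_neg_sq_div_two] at hsplit
  unfold stdNormalCDF
  rw [hreflect, eq_sub_of_add_eq' hsplit]
  field_simp

lemma integral_Iic_comp_sub_div (g : ℝ → ℝ) (c L : ℝ) {s : ℝ} (hs : 0 < s) :
    ∫ x in Iic L, g ((x - c) / s) = s * ∫ y in Iic ((L - c) / s), g y := by
  rw [← integral_indicator measurableSet_Iic, ← integral_indicator measurableSet_Iic]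
  have hind : (Iic L).indicator (fun x => g ((x - c) / s))
      = fun x => (Iic ((L - c) / s)).indicator g ((x - c) / s) := by
    ext x
    simp only [indicator, mem_Iic, div_le_div_iff_of_pos_right hs, sub_le_sub_iff_right]
  rw [hind, integral_sub_right_eq_self (fun x => (Iic ((L - c) / s)).indicator g (x / s)) c,
    Measure.integral_comp_div, abs_of_pos hs, smul_eq_mul]

lemma integral_Iic_exp_neg_sq_div (c L : ℝ) (hv : 0 < v) :
    ∫ x in Iic L, exp (-(x - c) ^ 2 / (2 * v)) = √(2 * π * v) * stdNormalCDF ((L - c) / √v) := by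
  have hs : 0 < √v := sqrt_pos.2 hv
  have hstd : ∀ x, exp (-(x - c) ^ 2 / (2 * v)) = exp (-((x - c) / √v) ^ 2 / 2) := fun x => by
    rw [div_pow, sq_sqrt hv.le]
    ring_nf
  simp_rw [hstd]
  rw [integral_Iic_comp_sub_div (fun y => exp (-y ^ 2 / 2)) c L hs, stdNormalCDF,
    sqrt_mul (by positivity), mul_comm √(2 * π), mul_assoc, mul_inv_cancel_left₀ (by positivity)]

lemma integral_Iic_sub_mul_exp_neg_sq_div_self (c L : ℝ) (hv : 0 < v) :
    ∫ x in Iic L, (c - x) * exp (-(x - c) ^ 2 / (2 * v)) = v * exp (-(L - c) ^ 2 / (2 * v)) := by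
  have hderiv : ∀ x, HasDerivAt (fun x => v * exp (-(x - c) ^ 2 / (2 * v)))
      ((c - x) * exp (-(x - c) ^ 2 / (2 * v))) x := fun x => by
    have hexp := ((((hasDerivAt_id' x).sub_const c).fun_pow 2).fun_neg.div_const (2 * v)).exp
    refine (hexp.const_mul v).congr_deriv ?_
    field_simp
    ring
  have hint := (integrable_sub_mul_exp_neg_sq_div c c hv).integrableOn (s := Iic L)
  have hlim := tendsto_zero_of_hasDerivAt_of_integrableOn_Iic (fun x _ => hderiv x) hint
    (((integrable_exp_neg_sq_div c hv).const_mul v).integrableOn)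
  rw [integral_Iic_of_hasDerivAt_of_tendsto' (fun x _ => hderiv x) hint hlim, sub_zero]

lemma integral_Iic_sub_mul_exp_neg_sq_div (p c L : ℝ) (hv : 0 < v) :
    ∫ x in Iic L, (p - x) * exp (-(x - c) ^ 2 / (2 * v))
      = v * (exp (-(L - c) ^ 2 / (2 * v))
          + (p - c) * √(2 * π / v) * stdNormalCDF ((L - c) / √v)) := by
  have hsplit : ∀ x, (p - x) * exp (-(x - c) ^ 2 / (2 * v))
      = (p - c) * exp (-(x - c) ^ 2 / (2 * v)) + (c - x) * exp (-(x - c) ^ 2 / (2 * v)) :=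
    fun x => by ring
  simp_rw [hsplit]
  rw [integral_add (((integrable_exp_neg_sq_div c hv).const_mul _).integrableOn)
    (integrable_sub_mul_exp_neg_sq_div c c hv).integrableOn, integral_const_mul,
    integral_Iic_exp_neg_sq_div c L hv, integral_Iic_sub_mul_exp_neg_sq_div_self c L hv,
    sqrt_div' _ hv.le, sqrt_mul' _ hv.le]
  field_simp
  linear_combination (p - c) * √(2 * π) * stdNormalCDF ((L - c) / √v) * mul_self_sqrt hv.le

end Gaussian

section Wiener

variable {μ σ x0 S u θ t : ℝ}

noncomputable def bridgeKernel (σ θ t y z x : ℝ) : ℝ :=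
  exp (-(x - ((t - θ) * y + θ * z) / t) ^ 2 / (2 * (σ ^ 2 * θ * (t - θ) / t)))

lemma exp_mul_exp_reflect (x y : ℝ) (hσ : σ ≠ 0) (hθ : θ ≠ 0) :
    exp (-(x - y - μ * θ) ^ 2 / (2 * σ ^ 2 * θ)) * exp (-(2 * (S - x) * (S - y)) / (σ ^ 2 * θ))
      = exp (2 * μ * (S - y) / σ ^ 2) *
        exp (-(x - (2 * S - y) - μ * θ) ^ 2 / (2 * σ ^ 2 * θ)) := by
  rw [← exp_add, ← exp_add]
  congr 1
  field_simp
  ring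

lemma exp_mul_exp_eq_bridgeKernel (x y z : ℝ) (hσ : σ ≠ 0) (hθ : θ ≠ 0) (ht : t ≠ 0)
    (htθ : t - θ ≠ 0) :
    exp (-(x - y - μ * θ) ^ 2 / (2 * σ ^ 2 * θ)) *
        exp (-(z - x - μ * (t - θ)) ^ 2 / (2 * σ ^ 2 * (t - θ)))
      = exp (-(z - y - μ * t) ^ 2 / (2 * σ ^ 2 * t)) * bridgeKernel σ θ t y z x := by
  rw [bridgeKernel, ← exp_add, ← exp_add]
  congr 1
  field_simp
  ring

lemma exp_mul_exp_reflect_endpoint (y z : ℝ) (hσ : σ ≠ 0) (ht : t ≠ 0) :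
    exp (2 * μ * (S - y) / σ ^ 2) * exp (-(z - (2 * S - y) - μ * t) ^ 2 / (2 * σ ^ 2 * t))
      = exp (-(z - y - μ * t) ^ 2 / (2 * σ ^ 2 * t)) *
        exp (-(2 * (S - y) * (S - z)) / (σ ^ 2 * t)) := by
  rw [← exp_add, ← exp_add]
  congr 1
  field_simp
  ring

lemma killed_density_mul_first_passage_density (x : ℝ) (hσ : σ ≠ 0) (hθ : θ ≠ 0) (ht : t ≠ 0)
    (htθ : t - θ ≠ 0) :
    ((√(2 * π * σ ^ 2 * θ))⁻¹ * exp (-(x - x0 - μ * θ) ^ 2 / (2 * σ ^ 2 * θ)) *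
        (1 - exp (-(2 * (S - x) * (S - x0)) / (σ ^ 2 * θ)))) *
      ((S - (x + u)) / √(2 * π * σ ^ 2 * (t - θ) ^ 3) *
        exp (-(S - (x + u) - μ * (t - θ)) ^ 2 / (2 * σ ^ 2 * (t - θ))))
    = (√(2 * π * σ ^ 2 * θ))⁻¹ * (√(2 * π * σ ^ 2 * (t - θ) ^ 3))⁻¹ *
        exp (-(S - u - x0 - μ * t) ^ 2 / (2 * σ ^ 2 * t)) *
      ((S - u - x) * bridgeKernel σ θ t x0 (S - u) x
        - exp (-(2 * (S - x0) * u) / (σ ^ 2 * t)) *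
          ((S - u - x) * bridgeKernel σ θ t (2 * S - x0) (S - u) x)) := by
  rw [show S - (x + u) = S - u - x by ring]
  have hfree := exp_mul_exp_eq_bridgeKernel (μ := μ) x x0 (S - u) hσ hθ ht htθ
  have himage := exp_mul_exp_eq_bridgeKernel (μ := μ) x (2 * S - x0) (S - u) hσ hθ ht htθ
  have hreflect := exp_mul_exp_reflect (μ := μ) (S := S) x x0 hσ hθ
  have hendpoint := exp_mul_exp_reflect_endpoint (μ := μ) (S := S) x0 (S - u) hσ ht
  rw [sub_sub_cancel] at hendpoint
  linear_combination (√(2 * π * σ ^ 2 * θ))⁻¹ * (√(2 * π * σ ^ 2 * (t - θ) ^ 3))⁻¹ * (S - u - x) *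
    (hfree - exp (-(S - u - x - μ * (t - θ)) ^ 2 / (2 * σ ^ 2 * (t - θ))) * hreflect
      - exp (2 * μ * (S - x0) / σ ^ 2) * himage
      - bridgeKernel σ θ t (2 * S - x0) (S - u) x * hendpoint)

lemma integrable_sub_mul_bridgeKernel (y z : ℝ) (hσ : 0 < σ) (hθ : 0 < θ) (hθt : θ < t) :
    Integrable fun x => (z - x) * bridgeKernel σ θ t y z x := by
  have htθ : 0 < t - θ := sub_pos.2 hθt
  have ht : 0 < t := hθ.trans hθt
  exact integrable_sub_mul_exp_neg_sq_div _ _ (by positivity)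

lemma integral_Iic_sub_mul_bridgeKernel (y z L : ℝ) (hσ : 0 < σ) (hθ : 0 < θ) (hθt : θ < t) :
    ∫ x in Iic L, (z - x) * bridgeKernel σ θ t y z x
      = σ ^ 2 * θ * (t - θ) / t *
        (exp (-((t - θ) * (L - y) + θ * (L - z)) ^ 2 / (2 * σ ^ 2 * θ * t * (t - θ)))
          + √(2 * π * (t - θ) / (σ ^ 2 * t * θ)) * (z - y) *
            stdNormalCDF (((t - θ) * (L - y) + θ * (L - z)) / √(σ ^ 2 * θ * t * (t - θ)))) := by
  have htθ : 0 < t - θ := sub_pos.2 hθt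
  have ht : 0 < t := hθ.trans hθt
  have hv : 0 < σ ^ 2 * θ * (t - θ) / t := by positivity
  have hsd : √(σ ^ 2 * θ * t * (t - θ)) = t * √(σ ^ 2 * θ * (t - θ) / t) := by
    rw [sqrt_eq_iff_mul_self_eq_of_pos (by positivity), mul_mul_mul_comm, mul_self_sqrt hv.le]
    field_simp
  have hslope : √(2 * π * (t - θ) / (σ ^ 2 * t * θ))
      = (t - θ) / t * √(2 * π / (σ ^ 2 * θ * (t - θ) / t)) := by
    rw [sqrt_eq_iff_mul_self_eq_of_pos (by positivity), mul_mul_mul_comm,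
      mul_self_sqrt (by positivity)]
    field_simp
  simp only [bridgeKernel]
  rw [integral_Iic_sub_mul_exp_neg_sq_div _ _ _ hv, hslope, hsd, mul_comm t, ← div_div]
  congr 3
  · field_simp
    ring
  · field_simp
    ring
  · congr 1
    field_simp
    ring

lemma bridge_prefactor (hσ : 0 < σ) (hθ : 0 < θ) (hθt : θ < t) :
    (√(2 * π * σ ^ 2 * θ))⁻¹ * (√(2 * π * σ ^ 2 * (t - θ) ^ 3))⁻¹ * (σ ^ 2 * θ * (t - θ) / t)
      = 1 / (2 * π * t) * √(θ / (t - θ)) := by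
  have htθ : 0 < t - θ := sub_pos.2 hθt
  have ht : 0 < t := hθ.trans hθt
  rw [← sq_eq_sq₀ (by positivity) (by positivity)]
  simp only [mul_pow, inv_pow, div_pow, sq_sqrt (by positivity : (0 : ℝ) ≤ 2 * π * σ ^ 2 * θ),
    sq_sqrt (by positivity : (0 : ℝ) ≤ 2 * π * σ ^ 2 * (t - θ) ^ 3),
    sq_sqrt (by positivity : (0 : ℝ) ≤ θ / (t - θ))]
  field_simp

end Wiener

theorem stmt_11_general (μ σ x0 S u θ t : ℝ) (hσ : 0 < σ)
    (hθ : 0 < θ) (hθt : θ < t)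
    (m : ℝ)
    (Aplus Aminus : ℝ)
    (hAplus : Aplus =
      Real.exp (-((m - u) * θ + (S - x0 + m) * (t - θ)) ^ 2 /
          (2 * σ ^ 2 * θ * t * (t - θ)))
        - Real.sqrt (2 * Real.pi * (t - θ) / (σ ^ 2 * t * θ)) * (S - x0 + u) *
            (1 - stdNormalCDF (((m - u) * θ + (S - x0 + m) * (t - θ)) /
              Real.sqrt (σ ^ 2 * θ * t * (t - θ)))))
    (hAminus : Aminus =
      Real.exp (-((m - u) * θ - (S - x0 - m) * (t - θ)) ^ 2 /
          (2 * σ ^ 2 * θ * t * (t - θ)))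
        + Real.sqrt (2 * Real.pi * (t - θ) / (σ ^ 2 * t * θ)) * (S - x0 - u) *
            (1 - stdNormalCDF (((m - u) * θ - (S - x0 - m) * (t - θ)) /
              Real.sqrt (σ ^ 2 * θ * t * (t - θ))))) :
    ∫ x in Set.Iic (S - m),
        ((Real.sqrt (2 * Real.pi * σ ^ 2 * θ))⁻¹ *
            Real.exp (-(x - x0 - μ * θ) ^ 2 / (2 * σ ^ 2 * θ)) *
            (1 - Real.exp (-(2 * (S - x) * (S - x0)) / (σ ^ 2 * θ)))) *
          ((S - (x + u)) / Real.sqrt (2 * Real.pi * σ ^ 2 * (t - θ) ^ 3) *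
            Real.exp (-(S - (x + u) - μ * (t - θ)) ^ 2 / (2 * σ ^ 2 * (t - θ))))
      = 1 / (2 * Real.pi * t) * Real.sqrt (θ / (t - θ)) *
          Real.exp (-(S - u - x0 - μ * t) ^ 2 / (2 * σ ^ 2 * t)) *
          (Aminus - Real.exp (-(2 * (S - x0) * u) / (σ ^ 2 * t)) * Aplus) := by
  have htθ : 0 < t - θ := sub_pos.2 hθt
  have ht : 0 < t := hθ.trans hθt
  rw [setIntegral_congr_fun measurableSet_Iic fun x _ =>
      killed_density_mul_first_passage_density x hσ.ne' hθ.ne' ht.ne' htθ.ne',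
    integral_const_mul,
    integral_sub (integrable_sub_mul_bridgeKernel _ _ hσ hθ hθt).integrableOn
      ((integrable_sub_mul_bridgeKernel _ _ hσ hθ hθt).integrableOn.const_mul _),
    integral_const_mul, integral_Iic_sub_mul_bridgeKernel _ _ _ hσ hθ hθt,
    integral_Iic_sub_mul_bridgeKernel _ _ _ hσ hθ hθt]
  have hfree : (t - θ) * (S - m - x0) + θ * (S - m - (S - u))
      = -((m - u) * θ - (S - x0 - m) * (t - θ)) := by ring
  have himage : (t - θ) * (S - m - (2 * S - x0)) + θ * (S - m - (S - u))
      = -((m - u) * θ + (S - x0 + m) * (t - θ)) := by ring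
  rw [hfree, himage, neg_sq, neg_sq, neg_div √(σ ^ 2 * θ * t * (t - θ)),
    neg_div √(σ ^ 2 * θ * t * (t - θ)), stdNormalCDF_neg, stdNormalCDF_neg, hAplus, hAminus,
    ← bridge_prefactor hσ hθ hθt]
  ring

/-- Closed form of `∫_{-∞}^{S-m} α_W(x, θ | x₀) g_W(S, t-θ | x+u) dx`, where
`α_W` is the `S`-avoiding transition density and `g_W` the first-crossing-time
density of a Wiener process with drift `μ` and variance `σ²`, `m = max{u, 0}`,
and `0 < θ < t`. -/
theorem stmt_11 (μ σ x0 S u θ t : ℝ) (hσ : 0 < σ) (hx0 : x0 < S)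
    (hθ : 0 < θ) (hθt : θ < t)
    (m : ℝ) (hm : m = max u 0)
    (Aplus Aminus : ℝ)
    (hAplus : Aplus =
      Real.exp (-((m - u) * θ + (S - x0 + m) * (t - θ)) ^ 2 /
          (2 * σ ^ 2 * θ * t * (t - θ)))
        - Real.sqrt (2 * Real.pi * (t - θ) / (σ ^ 2 * t * θ)) * (S - x0 + u) *
            (1 - stdNormalCDF (((m - u) * θ + (S - x0 + m) * (t - θ)) /
              Real.sqrt (σ ^ 2 * θ * t * (t - θ)))))
    (hAminus : Aminus =
      Real.exp (-((m - u) * θ - (S - x0 - m) * (t - θ)) ^ 2 /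
          (2 * σ ^ 2 * θ * t * (t - θ)))
        + Real.sqrt (2 * Real.pi * (t - θ) / (σ ^ 2 * t * θ)) * (S - x0 - u) *
            (1 - stdNormalCDF (((m - u) * θ - (S - x0 - m) * (t - θ)) /
              Real.sqrt (σ ^ 2 * θ * t * (t - θ))))) :
    ∫ x in Set.Iic (S - m),
        ((Real.sqrt (2 * Real.pi * σ ^ 2 * θ))⁻¹ *
            Real.exp (-(x - x0 - μ * θ) ^ 2 / (2 * σ ^ 2 * θ)) *
            (1 - Real.exp (-(2 * (S - x) * (S - x0)) / (σ ^ 2 * θ)))) *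
          ((S - (x + u)) / Real.sqrt (2 * Real.pi * σ ^ 2 * (t - θ) ^ 3) *
            Real.exp (-(S - (x + u) - μ * (t - θ)) ^ 2 / (2 * σ ^ 2 * (t - θ))))
      = 1 / (2 * Real.pi * t) * Real.sqrt (θ / (t - θ)) *
          Real.exp (-(S - u - x0 - μ * t) ^ 2 / (2 * σ ^ 2 * t)) *
          (Aminus - Real.exp (-(2 * (S - x0) * u) / (σ ^ 2 * t)) * Aplus) :=
  stmt_11_general μ σ x0 S u θ t hσ hθ hθt m Aplus Aminus hAplus hAminus
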